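/- The subgroup ₀Γ'₂ = Γ'₂ ∩ Sp(4,ℤ) has index 3 in Γ'₂, and the three matrices 1 (the identity), S₂ (the matrix equal to the identity except that its (2,4) entry is 1/2), and J₂ (the matrix with rows (0,0,−1,0), (0,0,0,−1/2), (1,0,0,0), (0,2,0,0)) form a complete system of representatives for the left cosets ₀Γ'₂\Γ'₂. -/

import Mathlib

/-!
Conjugating by `I₂` shows that `g ∈ Γ'₂` is a rational symplectic matrix whose entries are
integers, except that `g 1 3` (0-based indices; the `(2,4)` entry of the paper) lies in `½ℤ`.
Hence `g ∈ ₀Γ'₂` exactly when `a := 2 g 1 3` is even. Right multiplication by `S₂⁻¹` or `J₂⁻¹`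
keeps `g` in `Γ'₂` and replaces `a` by `a - m` or by `m`, where `m := g 1 1`. The symplectic
relation makes `m` and `a` not both even, so exactly one of `a`, `a - m`, `m` is even: exactly
one of `1, S₂, J₂` moves `g` into `₀Γ'₂`, and these three form a transversal, of size `3`.
-/

open Matrix

noncomputable section

abbrev M4 : Type := Matrix (Fin 4) (Fin 4) ℚ

def Jmat : M4 := !![0,0,1,0; 0,0,0,1; -1,0,0,0; 0,-1,0,0]

/-- Exponent pattern of the paramodular group `Γ_t`: the `(i,j)` entry of an element
lies in `t^(pexp i j) ℤ`. -/
def pexp : Matrix (Fin 4) (Fin 4) ℤ := !![0,0,0,1; 1,0,1,1; 0,0,0,1; 0,-1,0,0]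

lemma pexp_triangle : ∀ i k j : Fin 4, pexp i j ≤ pexp i k + pexp k j := by decide

lemma pexp_diag : ∀ i : Fin 4, pexp i i = 0 := by decide

def rho : Fin 4 → Fin 4 := ![2,3,0,1]
def sgn : Fin 4 → ℤ := ![1,1,-1,-1]
def tgn : Fin 4 → ℤ := ![-1,-1,1,1]

lemma pexp_rho : ∀ i j : Fin 4, pexp (rho j) (rho i) = pexp i j := by
  intro i j; fin_cases i <;> fin_cases j <;> rfl

lemma Jmat_mul_Jmat : Jmat * Jmat = -1 := by
  ext i j
  fin_cases i <;> fin_cases j <;>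
    simp [Jmat, Matrix.mul_apply, Fin.sum_univ_four, Matrix.one_apply, Matrix.vecHead, Matrix.vecTail]

lemma sympl_form_inv (g : GL (Fin 4) ℚ) (hg : (g : M4)ᵀ * Jmat * (g : M4) = Jmat) :
    ((g⁻¹ : GL (Fin 4) ℚ) : M4) = -(Jmat * (g : M4)ᵀ * Jmat) := by
  have h1 : (-(Jmat * (g : M4)ᵀ * Jmat)) * (g : M4) = 1 := by
    have h2 : (-(Jmat * (g : M4)ᵀ * Jmat)) * (g : M4) =
        -(Jmat * ((g : M4)ᵀ * Jmat * (g : M4))) := by noncomm_ring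
    rw [h2, hg, Jmat_mul_Jmat]
    simp
  calc ((g⁻¹ : GL (Fin 4) ℚ) : M4) = 1 * ((g⁻¹ : GL (Fin 4) ℚ) : M4) := (one_mul _).symm
    _ = ((-(Jmat * (g : M4)ᵀ * Jmat)) * (g : M4)) * ((g⁻¹ : GL (Fin 4) ℚ) : M4) := by rw [h1]
    _ = (-(Jmat * (g : M4)ᵀ * Jmat)) * ((g : M4) * ((g⁻¹ : GL (Fin 4) ℚ) : M4)) := by
        rw [mul_assoc]
    _ = -(Jmat * (g : M4)ᵀ * Jmat) := by rw [Units.mul_inv]; rw [mul_one]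

lemma inv_entry (g : GL (Fin 4) ℚ) (hg : (g : M4)ᵀ * Jmat * (g : M4) = Jmat) (i j : Fin 4) :
    ((g⁻¹ : GL (Fin 4) ℚ) : M4) i j =
      -((sgn i : ℚ) * (tgn j : ℚ) * (g : M4) (rho j) (rho i)) := by
  rw [sympl_form_inv g hg]
  fin_cases i <;> fin_cases j <;>
    simp [Jmat, rho, sgn, tgn, Matrix.mul_apply, Fin.sum_univ_four, Matrix.vecHead,
      Matrix.vecTail, Matrix.vecMul, dotProduct]

/-- A rational matrix has integer entries. -/
def IntM (A : M4) : Prop := ∀ i j, ∃ n : ℤ, A i j = (n : ℚ)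

lemma IntM.mul {A B : M4} (hA : IntM A) (hB : IntM B) : IntM (A * B) := by
  intro i j
  have key : ∀ k, ∃ n : ℤ, A i k * B k j = (n : ℚ) := fun k => by
    obtain ⟨p, hp⟩ := hA i k
    obtain ⟨q, hq⟩ := hB k j
    exact ⟨p * q, by rw [hp, hq]; push_cast; ring⟩
  choose f hf using key
  refine ⟨∑ k, f k, ?_⟩
  rw [Matrix.mul_apply, Finset.sum_congr rfl (fun k _ => hf k)]
  push_cast
  rfl

lemma IntM.transpose {A : M4} (hA : IntM A) : IntM Aᵀ := fun i j => hA j i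

lemma IntM.neg {A : M4} (hA : IntM A) : IntM (-A) := fun i j => by
  obtain ⟨n, hn⟩ := hA i j
  exact ⟨-n, by rw [Matrix.neg_apply, hn]; push_cast; ring⟩

lemma IntM.one : IntM 1 := fun i j => by
  by_cases h : i = j
  · exact ⟨1, by simp [Matrix.one_apply, h]⟩
  · exact ⟨0, by simp [Matrix.one_apply, h]⟩

def JmatZ : Matrix (Fin 4) (Fin 4) ℤ := !![0,0,1,0; 0,0,0,1; -1,0,0,0; 0,-1,0,0]

lemma Jmat_eq_map : Jmat = JmatZ.map (Int.cast : ℤ → ℚ) := by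
  ext i j
  fin_cases i <;> fin_cases j <;> simp [Jmat, JmatZ, Matrix.vecHead, Matrix.vecTail]

lemma IntM.Jmat : IntM Jmat := fun i j =>
  ⟨JmatZ i j, by rw [Jmat_eq_map]; simp [Matrix.map_apply]⟩

/-- `Sp(4,ℤ)`: the subgroup of `GL(4,ℚ)` of integer matrices `g` with `gᵀ J g = J`. -/
def Sp4Z : Subgroup (GL (Fin 4) ℚ) where
  carrier := {g | IntM (g : M4) ∧ (g : M4)ᵀ * Jmat * (g : M4) = Jmat}
  one_mem' := ⟨by rw [Units.val_one]; exact IntM.one, by simp⟩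
  mul_mem' := by
    rintro a b ⟨hai, haf⟩ ⟨hbi, hbf⟩
    constructor
    · rw [Units.val_mul]; exact hai.mul hbi
    · rw [Units.val_mul, transpose_mul]
      calc (b : M4)ᵀ * (a : M4)ᵀ * Jmat * ((a : M4) * (b : M4))
          = (b : M4)ᵀ * ((a : M4)ᵀ * Jmat * (a : M4)) * (b : M4) := by noncomm_ring
        _ = Jmat := by rw [haf, hbf]
  inv_mem' := by
    rintro a ⟨hai, haf⟩
    constructor
    · rw [sympl_form_inv a haf]
      exact (((IntM.Jmat.mul hai.transpose).mul IntM.Jmat)).neg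
    · have h1 : ((a : M4) * ((a⁻¹ : GL (Fin 4) ℚ) : M4)) = 1 := Units.mul_inv a
      calc ((a⁻¹ : GL (Fin 4) ℚ) : M4)ᵀ * Jmat * ((a⁻¹ : GL (Fin 4) ℚ) : M4)
          = ((a⁻¹ : GL (Fin 4) ℚ) : M4)ᵀ * ((a : M4)ᵀ * Jmat * (a : M4)) *
              ((a⁻¹ : GL (Fin 4) ℚ) : M4) := by rw [haf]
        _ = ((a : M4) * ((a⁻¹ : GL (Fin 4) ℚ) : M4))ᵀ * Jmat *
              ((a : M4) * ((a⁻¹ : GL (Fin 4) ℚ) : M4)) := by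
            rw [transpose_mul]; noncomm_ring
        _ = Jmat := by rw [h1]; simp

/-- The paramodular group `Γ_t`: the subgroup of `Sp(4,ℚ)` of matrices whose entries are
integers except possibly the `(4,2)` entry, which lies in `t⁻¹ℤ`, and whose entries at
positions `(1,4)`, `(2,1)`, `(2,3)`, `(2,4)`, `(3,4)` lie in `tℤ`. -/
def Gamma (t : ℕ) (ht : t ≠ 0) : Subgroup (GL (Fin 4) ℚ) where
  carrier := {g | (g : M4)ᵀ * Jmat * (g : M4) = Jmat ∧
    ∀ i j, ∃ n : ℤ, (g : M4) i j = (n : ℚ) * (t : ℚ) ^ (pexp i j)}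
  one_mem' := by
    constructor
    · simp
    · intro i j
      by_cases hij : i = j
      · subst hij
        exact ⟨1, by simp [Units.val_one, Matrix.one_apply, pexp_diag]⟩
      · exact ⟨0, by simp [Units.val_one, Matrix.one_apply, hij]⟩
  mul_mem' := by
    rintro a b ⟨haf, hap⟩ ⟨hbf, hbp⟩
    have htq : (t : ℚ) ≠ 0 := Nat.cast_ne_zero.mpr ht
    constructor
    · rw [Units.val_mul, transpose_mul]
      calc (b : M4)ᵀ * (a : M4)ᵀ * Jmat * ((a : M4) * (b : M4))
          = (b : M4)ᵀ * ((a : M4)ᵀ * Jmat * (a : M4)) * (b : M4) := by noncomm_ring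
        _ = Jmat := by rw [haf, hbf]
    · intro i j
      have key : ∀ k : Fin 4, ∃ n : ℤ,
          (a : M4) i k * (b : M4) k j = (n : ℚ) * (t : ℚ) ^ (pexp i j) := by
        intro k
        obtain ⟨p, hp⟩ := hap i k
        obtain ⟨q, hq⟩ := hbp k j
        refine ⟨p * q * (t : ℤ) ^ (pexp i k + pexp k j - pexp i j).toNat, ?_⟩
        have hd : (0 : ℤ) ≤ pexp i k + pexp k j - pexp i j := by
          have := pexp_triangle i k j; omega
        have hcast : ((p * q * (t : ℤ) ^ (pexp i k + pexp k j - pexp i j).toNat : ℤ) : ℚ)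
            = (p : ℚ) * (q : ℚ) * (t : ℚ) ^ (pexp i k + pexp k j - pexp i j) := by
          push_cast
          rw [← zpow_natCast (t : ℚ), Int.toNat_of_nonneg hd]
        have hpow : (t : ℚ) ^ (pexp i k + pexp k j - pexp i j) * (t : ℚ) ^ (pexp i j)
            = (t : ℚ) ^ (pexp i k) * (t : ℚ) ^ (pexp k j) := by
          rw [← zpow_add₀ htq, ← zpow_add₀ htq]
          congr 1
          ring
        rw [hp, hq, hcast, mul_assoc ((p : ℚ) * (q : ℚ)), hpow]
        ring
      choose f hf using key
      refine ⟨∑ k, f k, ?_⟩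
      rw [Units.val_mul, Matrix.mul_apply, Finset.sum_congr rfl (fun k _ => hf k),
        ← Finset.sum_mul]
      push_cast
      ring
  inv_mem' := by
    rintro a ⟨haf, hap⟩
    refine ⟨?_, ?_⟩
    · have h1 : ((a : M4) * ((a⁻¹ : GL (Fin 4) ℚ) : M4)) = 1 := Units.mul_inv a
      calc ((a⁻¹ : GL (Fin 4) ℚ) : M4)ᵀ * Jmat * ((a⁻¹ : GL (Fin 4) ℚ) : M4)
          = ((a⁻¹ : GL (Fin 4) ℚ) : M4)ᵀ * ((a : M4)ᵀ * Jmat * (a : M4)) *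
              ((a⁻¹ : GL (Fin 4) ℚ) : M4) := by rw [haf]
        _ = ((a : M4) * ((a⁻¹ : GL (Fin 4) ℚ) : M4))ᵀ * Jmat *
              ((a : M4) * ((a⁻¹ : GL (Fin 4) ℚ) : M4)) := by
            rw [transpose_mul]; noncomm_ring
        _ = Jmat := by rw [h1]; simp
    · intro i j
      obtain ⟨n, hn⟩ := hap (rho j) (rho i)
      refine ⟨-(sgn i * tgn j * n), ?_⟩
      rw [inv_entry a haf i j, hn, ← pexp_rho i j]
      push_cast
      ring

/-- The matrix `I_t = diag(1, t⁻¹, 1, t)` as an element of `GL(4,ℚ)`. -/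
def It (t : ℕ) (ht : t ≠ 0) : GL (Fin 4) ℚ where
  val := diagonal ![1, (t : ℚ)⁻¹, 1, (t : ℚ)]
  inv := diagonal ![1, (t : ℚ), 1, (t : ℚ)⁻¹]
  val_inv := by
    have htq : (t : ℚ) ≠ 0 := Nat.cast_ne_zero.mpr ht
    rw [diagonal_mul_diagonal]
    ext i j
    fin_cases i <;> fin_cases j <;>
      simp [Matrix.diagonal_apply, Matrix.one_apply, Matrix.vecHead, Matrix.vecTail,
        inv_mul_cancel₀ htq, mul_inv_cancel₀ htq]
  inv_val := by
    have htq : (t : ℚ) ≠ 0 := Nat.cast_ne_zero.mpr ht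
    rw [diagonal_mul_diagonal]
    ext i j
    fin_cases i <;> fin_cases j <;>
      simp [Matrix.diagonal_apply, Matrix.one_apply, Matrix.vecHead, Matrix.vecTail,
        inv_mul_cancel₀ htq, mul_inv_cancel₀ htq]

/-- The conjugated paramodular group `Γ'_t = I_t Γ_t I_t⁻¹`. -/
def Gamma' (t : ℕ) (ht : t ≠ 0) : Subgroup (GL (Fin 4) ℚ) :=
  (Gamma t ht).map (MulAut.conj (It t ht)).toMonoidHom

/-- The matrix `S₂`: the identity except that its `(2,4)` entry is `1/2`. -/
def S2 : GL (Fin 4) ℚ where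
  val := !![1,0,0,0; 0,1,0,1/2; 0,0,1,0; 0,0,0,1]
  inv := !![1,0,0,0; 0,1,0,-(1/2); 0,0,1,0; 0,0,0,1]
  val_inv := by
    ext i j
    fin_cases i <;> fin_cases j <;>
      simp [Matrix.mul_apply, Fin.sum_univ_four, Matrix.one_apply, Matrix.vecHead,
        Matrix.vecTail] <;> norm_num
  inv_val := by
    ext i j
    fin_cases i <;> fin_cases j <;>
      simp [Matrix.mul_apply, Fin.sum_univ_four, Matrix.one_apply, Matrix.vecHead,
        Matrix.vecTail] <;> norm_num

/-- The matrix `J₂` with rows `(0,0,-1,0)`, `(0,0,0,-1/2)`, `(1,0,0,0)`, `(0,2,0,0)`. -/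
def J2 : GL (Fin 4) ℚ where
  val := !![0,0,-1,0; 0,0,0,-(1/2); 1,0,0,0; 0,2,0,0]
  inv := !![0,0,1,0; 0,0,0,1/2; -1,0,0,0; 0,-2,0,0]
  val_inv := by
    ext i j
    fin_cases i <;> fin_cases j <;>
      simp [Matrix.mul_apply, Fin.sum_univ_four, Matrix.one_apply, Matrix.vecHead,
        Matrix.vecTail] <;> norm_num
  inv_val := by
    ext i j
    fin_cases i <;> fin_cases j <;>
      simp [Matrix.mul_apply, Fin.sum_univ_four, Matrix.one_apply, Matrix.vecHead,
        Matrix.vecTail] <;> norm_num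

theorem Subgroup.index_subgroupOf_eq_ncard {G : Type*} [Group G] {H K : Subgroup G} {T : Set G}
    (hT : T ⊆ K) (h : ∀ g ∈ K, ∃! t, t ∈ T ∧ g * t⁻¹ ∈ H) :
    (H.subgroupOf K).index = T.ncard := by
  have hc : IsComplement (H.subgroupOf K : Set K) (Subtype.val ⁻¹' T) := by
    rw [isComplement_iff_existsUnique_mul_inv_mem]
    rintro ⟨g, hg⟩
    obtain ⟨t, ⟨htT, hgt⟩, huniq⟩ := h g hg
    refine ⟨⟨⟨t, hT htT⟩, htT⟩, hgt, ?_⟩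
    rintro ⟨⟨s, hs⟩, hsT⟩ hsH
    exact Subtype.ext (Subtype.ext (huniq s ⟨hsT, hsH⟩))
  rw [← hc.ncard_right, Set.ncard_preimage_of_injective_subset_range Subtype.val_injective
    (by simpa using hT)]

def Sp4Q : Subgroup (GL (Fin 4) ℚ) where
  carrier := {g | (g : M4)ᵀ * Jmat * g = Jmat}
  one_mem' := by simp
  mul_mem' := by
    rintro a b (ha : _ = Jmat) (hb : _ = Jmat)
    calc ((a * b : GL (Fin 4) ℚ) : M4)ᵀ * Jmat * ((a * b : GL (Fin 4) ℚ) : M4)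
        = (b : M4)ᵀ * ((a : M4)ᵀ * Jmat * a) * (b : M4) := by
          rw [Units.val_mul, transpose_mul]; noncomm_ring
      _ = Jmat := by rw [ha, hb]
  inv_mem' := by
    rintro a (ha : _ = Jmat)
    calc ((a⁻¹ : GL (Fin 4) ℚ) : M4)ᵀ * Jmat * ((a⁻¹ : GL (Fin 4) ℚ) : M4)
        = ((a : M4) * ((a⁻¹ : GL (Fin 4) ℚ) : M4))ᵀ * Jmat *
            ((a : M4) * ((a⁻¹ : GL (Fin 4) ℚ) : M4)) := by
          conv_lhs => rw [← ha]
          rw [transpose_mul]; noncomm_ring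
      _ = Jmat := by simp

def itExp : Fin 4 → ℤ := ![0, -1, 0, 1]

def pexp' (i j : Fin 4) : ℤ := pexp i j + itExp i - itExp j

section

variable {t : ℕ} (ht : t ≠ 0)

lemma It_val : (It t ht : M4) = diagonal fun i => (t : ℚ) ^ itExp i := by
  ext i j; fin_cases i <;> fin_cases j <;> simp [It, itExp]

lemma It_inv_val :
    (((It t ht)⁻¹ : GL (Fin 4) ℚ) : M4) = diagonal fun i => (t : ℚ) ^ (-itExp i) := by
  ext i j; fin_cases i <;> fin_cases j <;> simp [It, itExp]

lemma It_mem_Sp4Q : It t ht ∈ Sp4Q := by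
  have htq : (t : ℚ) ≠ 0 := Nat.cast_ne_zero.mpr ht
  show (It t ht : M4)ᵀ * Jmat * (It t ht : M4) = Jmat
  rw [It_val]
  ext i j; fin_cases i <;> fin_cases j <;> simp [Jmat, itExp, mul_apply, Fin.sum_univ_four, htq]

lemma It_conj_apply (g : GL (Fin 4) ℚ) (i j : Fin 4) :
    (((It t ht)⁻¹ * g * It t ht : GL (Fin 4) ℚ) : M4) i j
      = (t : ℚ) ^ (-itExp i) * (g : M4) i j * (t : ℚ) ^ itExp j := by
  rw [Units.val_mul, Units.val_mul, It_val, It_inv_val, mul_diagonal, diagonal_mul]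

lemma mem_Gamma'_iff {g : GL (Fin 4) ℚ} :
    g ∈ Gamma' t ht ↔ g ∈ Sp4Q ∧ ∀ i j, ∃ n : ℤ, (g : M4) i j = n * (t : ℚ) ^ pexp' i j := by
  have htq : (t : ℚ) ≠ 0 := Nat.cast_ne_zero.mpr ht
  rw [Gamma', Subgroup.mem_map_equiv, MulAut.conj_symm_apply]
  change (It t ht)⁻¹ * g * It t ht ∈ Sp4Q ∧ _ ↔ _
  rw [Sp4Q.mul_mem_cancel_right (It_mem_Sp4Q ht),
    Sp4Q.mul_mem_cancel_left (Sp4Q.inv_mem (It_mem_Sp4Q ht))]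
  refine and_congr_right fun _ => forall₂_congr fun i j => exists_congr fun n => ?_
  rw [It_conj_apply, pexp', zpow_sub₀ htq, zpow_add₀ htq, _root_.zpow_neg]
  have hi : (t : ℚ) ^ itExp i ≠ 0 := zpow_ne_zero _ htq
  have hj : (t : ℚ) ^ itExp j ≠ 0 := zpow_ne_zero _ htq
  constructor <;> intro h
  · field_simp at h ⊢; linear_combination h
  · rw [h]; field_simp

end

notation "Γ'₂" => Gamma' 2 two_ne_zero

lemma pexp'_nonneg {i j : Fin 4} (h : (i, j) ≠ (1, 3)) : 0 ≤ pexp' i j := by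
  revert i j; decide

lemma exists_int_eq_of_eq_mul_zpow {t : ℕ} {x : ℚ} {n e : ℤ} (hx : x = n * (t : ℚ) ^ e)
    (he : 0 ≤ e) : ∃ m : ℤ, x = m :=
  ⟨n * t ^ e.toNat, by rw [hx, ← Int.toNat_of_nonneg he, zpow_natCast]; push_cast; rfl⟩

lemma mem_Sp4Z_iff_of_mem_Gamma'_two {x : GL (Fin 4) ℚ} (hx : x ∈ Γ'₂) :
    x ∈ Sp4Z ↔ ∃ n : ℤ, (x : M4) 1 3 = n := by
  obtain ⟨hsp, hent⟩ := (mem_Gamma'_iff _).1 hx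
  refine ⟨fun h => h.1 1 3, fun h13 => ⟨fun i j => ?_, hsp⟩⟩
  by_cases hij : (i, j) = (1, 3)
  · obtain ⟨rfl, rfl⟩ := Prod.ext_iff.1 hij
    exact h13
  · obtain ⟨n, hn⟩ := hent i j
    exact exists_int_eq_of_eq_mul_zpow hn (pexp'_nonneg hij)

lemma mul_inv_mem_inf_Sp4Z_iff {g r : GL (Fin 4) ℚ} (hg : g ∈ Γ'₂) (hr : r ∈ Γ'₂) :
    g * r⁻¹ ∈ Γ'₂ ⊓ Sp4Z ↔ ∃ n : ℤ, ((g * r⁻¹ : GL (Fin 4) ℚ) : M4) 1 3 = n := by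
  have hgr := mul_mem hg (inv_mem hr)
  rw [Subgroup.mem_inf, mem_Sp4Z_iff_of_mem_Gamma'_two hgr, and_iff_right hgr]

lemma exists_int_entries_not_both_even_of_mem_Gamma'_two {g : GL (Fin 4) ℚ} (hg : g ∈ Γ'₂) :
    ∃ m a : ℤ, (g : M4) 1 1 = m ∧ (g : M4) 1 3 = a / 2 ∧ ¬(Even m ∧ Even a) := by
  obtain ⟨hsp, hent⟩ := (mem_Gamma'_iff _).1 hg
  choose A hA using hent
  -- entry `(1, 3)` of `gᵀ J g = J`, where `g 0 1`, `g 2 1` and `g 3 1` are even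
  have hdet : 2 * (A 0 1 * A 2 3 - A 2 1 * A 0 3) + A 1 1 * A 3 3 - A 3 1 * A 1 3 = 1 := by
    have h13 := congrFun (congrFun (show (g : M4)ᵀ * Jmat * g = Jmat from hsp) 1) 3
    simp only [mul_apply, transpose_apply, Fin.sum_univ_four, hA, Jmat, pexp', pexp, itExp,
      of_apply, cons_val', cons_val_zero, cons_val_one, cons_val, cons_val_fin_one] at h13
    qify
    linear_combination h13
  refine ⟨A 1 1, A 1 3, by rw [hA, show pexp' 1 1 = 0 by decide]; ring,
    by rw [hA, show pexp' 1 3 = -1 by decide]; ring, ?_⟩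
  rintro ⟨⟨m, hm⟩, ⟨a, ha⟩⟩
  have : (2 : ℤ) ∣ 1 :=
    ⟨A 0 1 * A 2 3 - A 2 1 * A 0 3 + m * A 3 3 - A 3 1 * a, by rw [← hdet, hm, ha]; ring⟩
  omega

lemma S2_mem_Gamma'_two : S2 ∈ Γ'₂ := by
  refine (mem_Gamma'_iff _).2 ⟨?_, fun i j => ⟨!![1,0,0,0; 0,1,0,1; 0,0,1,0; 0,0,0,1] i j, ?_⟩⟩
  · show (S2 : M4)ᵀ * Jmat * S2 = Jmat
    ext i j; fin_cases i <;> fin_cases j <;> simp [S2, Jmat, mul_apply, Fin.sum_univ_four]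
  · fin_cases i <;> fin_cases j <;> norm_num [S2, pexp', pexp, itExp]

lemma J2_mem_Gamma'_two : J2 ∈ Γ'₂ := by
  refine (mem_Gamma'_iff _).2 ⟨?_, fun i j => ⟨!![0,0,-1,0; 0,0,0,-1; 1,0,0,0; 0,1,0,0] i j, ?_⟩⟩
  · show (J2 : M4)ᵀ * Jmat * J2 = Jmat
    ext i j; fin_cases i <;> fin_cases j <;> simp [J2, Jmat, mul_apply, Fin.sum_univ_four]
  · fin_cases i <;> fin_cases j <;> norm_num [J2, pexp', pexp, itExp]

lemma one_ne_S2 : (1 : GL (Fin 4) ℚ) ≠ S2 := fun h => by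
  simpa [S2] using congrArg (fun u : GL (Fin 4) ℚ => (u : M4) 1 3) h

lemma one_ne_J2 : (1 : GL (Fin 4) ℚ) ≠ J2 := fun h => by
  simpa [J2] using congrArg (fun u : GL (Fin 4) ℚ => (u : M4) 0 0) h

lemma S2_ne_J2 : S2 ≠ J2 := fun h => by
  simpa [S2, J2] using congrArg (fun u : GL (Fin 4) ℚ => (u : M4) 0 0) h

lemma mul_S2_inv_apply_one_three (g : GL (Fin 4) ℚ) :
    ((g * S2⁻¹ : GL (Fin 4) ℚ) : M4) 1 3 = (g : M4) 1 3 - (g : M4) 1 1 / 2 := by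
  simp only [S2, Units.inv_mk, Units.val_mul, mul_apply, Fin.sum_univ_four, of_apply, cons_val',
    cons_val, cons_val_zero, cons_val_one, cons_val_fin_one]
  ring

lemma mul_J2_inv_apply_one_three (g : GL (Fin 4) ℚ) :
    ((g * J2⁻¹ : GL (Fin 4) ℚ) : M4) 1 3 = (g : M4) 1 1 / 2 := by
  simp only [J2, Units.inv_mk, Units.val_mul, mul_apply, Fin.sum_univ_four, of_apply, cons_val',
    cons_val, cons_val_zero, cons_val_one, cons_val_fin_one]
  ring

lemma exists_intCast_eq_div_two_iff_even {k : ℤ} : (∃ n : ℤ, (k : ℚ) / 2 = n) ↔ Even k := by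
  constructor
  · rintro ⟨n, hn⟩
    exact ⟨n, by exact_mod_cast (by linarith : (k : ℚ) = n + n)⟩
  · rintro ⟨n, rfl⟩
    exact ⟨n, by push_cast; ring⟩

lemma existsUnique_mul_inv_mem_inf_Sp4Z {g : GL (Fin 4) ℚ} (hg : g ∈ Γ'₂) :
    ∃! r, r ∈ ({1, S2, J2} : Set (GL (Fin 4) ℚ)) ∧ g * r⁻¹ ∈ Γ'₂ ⊓ Sp4Z := by
  obtain ⟨m, a, hm, ha, hma⟩ := exists_int_entries_not_both_even_of_mem_Gamma'_two hg
  have h1 : g * 1⁻¹ ∈ Γ'₂ ⊓ Sp4Z ↔ Even a := by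
    rw [mul_inv_mem_inf_Sp4Z_iff hg (one_mem _), inv_one, mul_one, ha,
      exists_intCast_eq_div_two_iff_even]
  have hS : g * S2⁻¹ ∈ Γ'₂ ⊓ Sp4Z ↔ Even (a - m) := by
    rw [mul_inv_mem_inf_Sp4Z_iff hg S2_mem_Gamma'_two, mul_S2_inv_apply_one_three, hm, ha,
      show (a : ℚ) / 2 - m / 2 = ((a - m : ℤ) : ℚ) / 2 by push_cast; ring,
      exists_intCast_eq_div_two_iff_even]
  have hJ : g * J2⁻¹ ∈ Γ'₂ ⊓ Sp4Z ↔ Even m := by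
    rw [mul_inv_mem_inf_Sp4Z_iff hg J2_mem_Gamma'_two, mul_J2_inv_apply_one_three, hm,
      exists_intCast_eq_div_two_iff_even]
  refine existsUnique_of_exists_of_unique ?_ ?_
  · have : Even a ∨ Even (a - m) ∨ Even m := by rw [Int.even_sub]; tauto
    rcases this with h | h | h
    exacts [⟨1, .inl rfl, h1.2 h⟩, ⟨S2, .inr (.inl rfl), hS.2 h⟩, ⟨J2, .inr (.inr rfl), hJ.2 h⟩]
  · rintro r s ⟨hr | hr | hr, hgr⟩ ⟨hs | hs | hs, hgs⟩ <;> subst hr hs <;>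
      simp only [h1, hS, hJ, Int.even_sub] at hgr hgs <;> tauto

/-- `₀Γ'₂ = Γ'₂ ∩ Sp(4,ℤ)` has index `3` in `Γ'₂`, and the three matrices
`1`, `S₂` and `J₂` form a complete system of representatives for the left cosets
`₀Γ'₂ \ Γ'₂`: they lie in `Γ'₂`, are pairwise distinct, and every element of `Γ'₂` lies in
exactly one coset `₀Γ'₂ · r` with `r ∈ {1, S₂, J₂}`. -/
theorem coset_representatives_gammaPrimeTwo :
    ((1 : GL (Fin 4) ℚ) ∈ Gamma' 2 (by norm_num) ∧
        S2 ∈ Gamma' 2 (by norm_num) ∧ J2 ∈ Gamma' 2 (by norm_num)) ∧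
      ((1 : GL (Fin 4) ℚ) ≠ S2 ∧ (1 : GL (Fin 4) ℚ) ≠ J2 ∧ S2 ≠ J2) ∧
      (((Gamma' 2 (by norm_num) ⊓ Sp4Z).subgroupOf (Gamma' 2 (by norm_num))).index = 3) ∧
      (∀ g ∈ Gamma' 2 (by norm_num), ∃! r : GL (Fin 4) ℚ,
        (r = 1 ∨ r = S2 ∨ r = J2) ∧ g * r⁻¹ ∈ Gamma' 2 (by norm_num) ⊓ Sp4Z) := by
  have hreps : ({1, S2, J2} : Set (GL (Fin 4) ℚ)) ⊆ Γ'₂ := by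
    rintro r (rfl | rfl | rfl)
    exacts [one_mem _, S2_mem_Gamma'_two, J2_mem_Gamma'_two]
  refine ⟨⟨one_mem _, S2_mem_Gamma'_two, J2_mem_Gamma'_two⟩, ⟨one_ne_S2, one_ne_J2, S2_ne_J2⟩,
    ?_, fun g hg => existsUnique_mul_inv_mem_inf_Sp4Z hg⟩
  rw [Subgroup.index_subgroupOf_eq_ncard hreps fun g hg => existsUnique_mul_inv_mem_inf_Sp4Z hg]
  exact Set.ncard_eq_three.2 ⟨1, S2, J2, one_ne_S2, one_ne_J2, S2_ne_J2, rfl⟩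

end
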